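/- arXiv:2108.12153 — 4 statements merged into one kernel-verified Lean document; each statement's English description precedes it below -/
import Mathlib

section
/- Let D₁ ∈ B(H₁), D₂ ∈ B(H₂). If there exists A ∈ B(H₂, H₁) such that the operator matrix [[D₁, A],[0, D₂]] is left invertible on H₁ ⊕ H₂, then D₁ is left invertible and α(D₂) ≤ β(D₁). -/
/-!
Since `T ∘ inl = inl ∘ D₁` for `T = [[D₁, A],[0, D₂]]`, a left inverse of `T` yields one of `D₁`;
so `R(D₁)` is closed and `H₁ ⧸ R(D₁) ≅ R(D₁)ᗮ`. If `z ∈ N(D₂)` and `A z = D₁ x`, then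
`T (-x, z) = 0`, so `z = 0`: hence `z ↦ [A z]` embeds `N(D₂)` linearly into `H₁ ⧸ R(D₁)`.
-/

open ContinuousLinearMap in
/-- The upper triangular operator matrix `[[D₁, A],[0, D₂]]` acting on `H₁ × H₂`. -/
noncomputable def upperTriangular {H₁ H₂ : Type*} [NormedAddCommGroup H₁] [NormedAddCommGroup H₂]
    [NormedSpace ℂ H₁] [NormedSpace ℂ H₂]
    (D₁ : H₁ →L[ℂ] H₁) (D₂ : H₂ →L[ℂ] H₂) (A : H₂ →L[ℂ] H₁) :
    (H₁ × H₂) →L[ℂ] (H₁ × H₂) :=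
  (D₁.comp (fst ℂ H₁ H₂) + A.comp (snd ℂ H₁ H₂)).prod (D₂.comp (snd ℂ H₁ H₂))

open ContinuousLinearMap Function

section UpperTriangular

variable {E F : Type*} [NormedAddCommGroup E] [NormedAddCommGroup F] [NormedSpace ℂ E]
  [NormedSpace ℂ F] {D₁ : E →L[ℂ] E} {D₂ : F →L[ℂ] F} {A : F →L[ℂ] E}

@[simp]
theorem upperTriangular_apply (D₁ : E →L[ℂ] E) (D₂ : F →L[ℂ] F) (A : F →L[ℂ] E) (x : E × F) :
    upperTriangular D₁ D₂ A x = (D₁ x.1 + A x.2, D₂ x.2) :=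
  rfl

theorem upperTriangular_comp_inl (D₁ : E →L[ℂ] E) (D₂ : F →L[ℂ] F) (A : F →L[ℂ] E) :
    (upperTriangular D₁ D₂ A).comp (inl ℂ E F) = (inl ℂ E F).comp D₁ := by
  ext x <;> simp

theorem ContinuousLinearMap.HasLeftInverse.of_upperTriangular
    (h : (upperTriangular D₁ D₂ A).HasLeftInverse) :
    D₁.HasLeftInverse :=
  HasLeftInverse.of_comp (g := inl ℂ E F) <|
    upperTriangular_comp_inl D₁ D₂ A ▸ h.comp HasLeftInverse.inl

theorem injective_mkQ_comp_restrict_ker_of_injective_upperTriangular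
    (h : Injective (upperTriangular D₁ D₂ A)) :
    Injective ((LinearMap.range (D₁ : E →ₗ[ℂ] E)).mkQ ∘ₗ (A : F →ₗ[ℂ] E) ∘ₗ
      (LinearMap.ker (D₂ : F →ₗ[ℂ] F)).subtype) := by
  rw [← LinearMap.ker_eq_bot, LinearMap.ker_eq_bot']
  rintro ⟨z, hz⟩ hAz
  obtain ⟨x, hx⟩ : A z ∈ LinearMap.range (D₁ : E →ₗ[ℂ] E) :=
    (Submodule.Quotient.mk_eq_zero _).mp hAz
  have hT : upperTriangular D₁ D₂ A (-x, z) = upperTriangular D₁ D₂ A 0 := by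
    simp [show D₁ x = A z from hx, show D₂ z = 0 from hz]
  exact Subtype.ext (congrArg Prod.snd (h hT))

end UpperTriangular

universe u v

variable {H₁ : Type u} {H₂ : Type v} [NormedAddCommGroup H₁] [InnerProductSpace ℂ H₁] [CompleteSpace H₁]
  [NormedAddCommGroup H₂] [InnerProductSpace ℂ H₂] [CompleteSpace H₂]

/-- If some completion `[[D₁, A],[0, D₂]]` is left invertible, then `D₁` is left
invertible and `α(D₂) ≤ β(D₁)`. -/
theorem stmt8 (D₁ : H₁ →L[ℂ] H₁) (D₂ : H₂ →L[ℂ] H₂)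
    (h : ∃ A : H₂ →L[ℂ] H₁, ∃ S : (H₁ × H₂) →L[ℂ] (H₁ × H₂),
      S.comp (upperTriangular D₁ D₂ A) = ContinuousLinearMap.id ℂ (H₁ × H₂)) :
    (∃ S : H₁ →L[ℂ] H₁, S.comp D₁ = ContinuousLinearMap.id ℂ H₁) ∧
      Cardinal.lift.{u} (Module.rank ℂ (LinearMap.ker (D₂ : H₂ →ₗ[ℂ] H₂))) ≤ Cardinal.lift.{v} (Module.rank ℂ ((LinearMap.range (D₁ : H₁ →ₗ[ℂ] H₁))ᗮ)) := by
  obtain ⟨A, S, hS⟩ := h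
  have hT : (upperTriangular D₁ D₂ A).HasLeftInverse := ⟨S, fun z => congr($hS z)⟩
  have hD₁ : D₁.HasLeftInverse := hT.of_upperTriangular
  refine ⟨⟨hD₁.leftInverse, ContinuousLinearMap.ext hD₁.leftInverse_leftInverse⟩, ?_⟩
  have : CompleteSpace (LinearMap.range (D₁ : H₁ →ₗ[ℂ] H₁)) :=
    hD₁.isClosed_range.completeSpace_coe
  calc Cardinal.lift.{u} (Module.rank ℂ (LinearMap.ker (D₂ : H₂ →ₗ[ℂ] H₂)))
      ≤ Cardinal.lift.{v} (Module.rank ℂ (H₁ ⧸ LinearMap.range (D₁ : H₁ →ₗ[ℂ] H₁))) :=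
        LinearMap.lift_rank_le_of_injective _
          (injective_mkQ_comp_restrict_ker_of_injective_upperTriangular hT.injective)
    _ = _ := by rw [(Submodule.quotientEquivOrthogonal _).toLinearEquiv.rank_eq]
end

section
/- Let D₁ ∈ B(H₁), D₂ ∈ B(H₂). If there exists A ∈ B(H₂, H₁) such that the operator matrix [[D₁, A],[0, D₂]] is right invertible on H₁ ⊕ H₂, then D₂ is right invertible and β(D₁) ≤ α(D₂). -/
universe u v

open Cardinal

namespace Submodule

variable {R M N : Type*} [Ring R] [AddCommGroup M] [Module R M] [AddCommGroup N] [Module R N]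

theorem mkQ_comp_surjective_of_sup_range_eq_top {U : Submodule R M} {g : N →ₗ[R] M}
    (h : U ⊔ LinearMap.range g = ⊤) : Function.Surjective (U.mkQ ∘ₗ g) := by
  rwa [← LinearMap.range_eq_top, LinearMap.range_comp, map_mkQ_eq_top]

theorem mkQ_comp_subtype_injective_of_disjoint {U V : Submodule R M} (h : Disjoint U V) :
    Function.Injective (U.mkQ ∘ₗ V.subtype) := by
  rw [← LinearMap.ker_eq_bot, LinearMap.ker_comp, ker_mkQ, ← disjoint_iff_comap_eq_bot]
  exact h.symm

end Submodule

theorem lift_rank_orthogonal_le_of_sup_range_eq_top {𝕜 : Type*} {E : Type u} {M : Type v}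
    [RCLike 𝕜] [NormedAddCommGroup E] [InnerProductSpace 𝕜 E] [AddCommGroup M] [Module 𝕜 M]
    {U : Submodule 𝕜 E} {g : M →ₗ[𝕜] E} (h : U ⊔ LinearMap.range g = ⊤) :
    lift.{v} (Module.rank 𝕜 Uᗮ) ≤ lift.{u} (Module.rank 𝕜 M) := by
  calc lift.{v} (Module.rank 𝕜 Uᗮ)
      ≤ lift.{v} (Module.rank 𝕜 (E ⧸ U)) :=
        lift_le.2 <| LinearMap.rank_le_of_injective _
          (Submodule.mkQ_comp_subtype_injective_of_disjoint U.orthogonal_disjoint)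
    _ ≤ lift.{u} (Module.rank 𝕜 M) :=
        LinearMap.lift_rank_le_of_surjective _ (Submodule.mkQ_comp_surjective_of_sup_range_eq_top h)

section UpperTriangular

variable {H₁ H₂ : Type*} [NormedAddCommGroup H₁] [NormedAddCommGroup H₂]
  [NormedSpace ℂ H₁] [NormedSpace ℂ H₂] {D₁ : H₁ →L[ℂ] H₁} {D₂ : H₂ →L[ℂ] H₂} {A : H₂ →L[ℂ] H₁}

@[simp]
theorem upperTriangular_apply_s10 (z : H₁ × H₂) :
    upperTriangular D₁ D₂ A z = (D₁ z.1 + A z.2, D₂ z.2) := rfl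

variable {S : (H₁ × H₂) →L[ℂ] (H₁ × H₂)}
  (hS : (upperTriangular D₁ D₂ A).comp S = ContinuousLinearMap.id ℂ (H₁ × H₂))
include hS

theorem upperTriangular_rightInverse_apply (z : H₁ × H₂) :
    D₁ (S z).1 + A (S z).2 = z.1 ∧ D₂ (S z).2 = z.2 := by
  simpa [Prod.ext_iff] using congr($hS z)

theorem exists_rightInverse_of_upperTriangular_rightInverse :
    ∃ S₂ : H₂ →L[ℂ] H₂, D₂.comp S₂ = ContinuousLinearMap.id ℂ H₂ :=
  ⟨.snd ℂ H₁ H₂ ∘L S ∘L .inr ℂ H₁ H₂, by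
    ext y; exact (upperTriangular_rightInverse_apply hS (0, y)).2⟩

theorem range_sup_range_comp_ker_eq_top_of_upperTriangular_rightInverse :
    LinearMap.range (D₁ : H₁ →ₗ[ℂ] H₁) ⊔
      LinearMap.range ((A : H₂ →ₗ[ℂ] H₁) ∘ₗ (LinearMap.ker (D₂ : H₂ →ₗ[ℂ] H₂)).subtype) = ⊤ := by
  refine Submodule.eq_top_iff'.2 fun x ↦ ?_
  obtain ⟨hx, hker⟩ : D₁ _ + A _ = x ∧ D₂ _ = 0 := upperTriangular_rightInverse_apply hS (x, 0)
  rw [← hx]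
  exact Submodule.add_mem_sup (LinearMap.mem_range_self _ _) ⟨⟨_, hker⟩, rfl⟩

end UpperTriangular

variable {H₁ : Type u} {H₂ : Type v} [NormedAddCommGroup H₁] [InnerProductSpace ℂ H₁] [CompleteSpace H₁]
  [NormedAddCommGroup H₂] [InnerProductSpace ℂ H₂] [CompleteSpace H₂]

/-- If some completion `[[D₁, A],[0, D₂]]` is right invertible, then `D₂` is right
invertible and `β(D₁) ≤ α(D₂)`. -/
theorem stmt10 (D₁ : H₁ →L[ℂ] H₁) (D₂ : H₂ →L[ℂ] H₂)
    (h : ∃ A : H₂ →L[ℂ] H₁, ∃ S : (H₁ × H₂) →L[ℂ] (H₁ × H₂),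
      (upperTriangular D₁ D₂ A).comp S = ContinuousLinearMap.id ℂ (H₁ × H₂)) :
    (∃ S : H₂ →L[ℂ] H₂, D₂.comp S = ContinuousLinearMap.id ℂ H₂) ∧
      Cardinal.lift.{v} (Module.rank ℂ ((LinearMap.range (D₁ : H₁ →ₗ[ℂ] H₁))ᗮ)) ≤ Cardinal.lift.{u} (Module.rank ℂ (LinearMap.ker (D₂ : H₂ →ₗ[ℂ] H₂))) := by
  obtain ⟨A, S, hS⟩ := h
  exact ⟨exists_rightInverse_of_upperTriangular_rightInverse hS,
    lift_rank_orthogonal_le_of_sup_range_eq_top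
      (range_sup_range_comp_ker_eq_top_of_upperTriangular_rightInverse hS)⟩
end

section
/- Let n ≥ 2 and D_i ∈ B(H_i). If there exist A_{ij} ∈ B(H_j, H_i), 1 ≤ i < j ≤ n, such that the upper triangular operator matrix T with diagonal D₁,...,D_n and upper entries A_{ij} is left invertible on H₁ ⊕ ⋯ ⊕ H_n, then D₁ is left invertible and α(D_i) ≤ β(D₁) + β(D₂) + ⋯ + β(D_{i−1}) for every 2 ≤ i ≤ n. -/
/-!
Work in the Hilbert sum `PiLp 2 H` and let `V` be the closed subspace of vectors supported on
the coordinates `< i`. Triangularity gives `T V ⊆ V`, and `T V` is closed because `T` is left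
invertible. For `x ∈ ker D_i` the vector `T (e_i x)` lies in `V`, and its component orthogonal
to `T V` vanishes only if `e_i x ∈ V`, i.e. `x = 0`; so `ker D_i` embeds in the wandering
subspace `V ⊖ T V`. If `w ∈ V ⊖ T V` has first nonzero coordinate `w_k`, then
`⟪D_k x, w_k⟫ = ⟪T (e_k x), w⟫ = 0`, so `w_k ∈ (ran D_k)ᗮ`; filtering `V ⊖ T V` by the position
of the first nonzero coordinate bounds its dimension by `β(D_0) + ⋯ + β(D_{i-1})`. Left
invertibility of `D_0` is immediate from `T (e_0 x) = e_0 (D_0 x)`.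
-/

universe v

theorem rank_le_sum_rank_of_leading_mem {K ι : Type*} {M : Type v} [DivisionRing K]
    [LinearOrder ι] [AddCommGroup M] [Module K M] {E : ι → Type v} [∀ k, AddCommGroup (E k)]
    [∀ k, Module K (E k)] (π : ∀ k, M →ₗ[K] E k) (B : ∀ k, Submodule K (E k)) (s : Finset ι)
    (hsep : ∀ w, (∀ k ∈ s, π k w = 0) → w = 0)
    (hlead : ∀ w, ∀ k ∈ s, (∀ j ∈ s, j < k → π j w = 0) → π k w ∈ B k) :
    Module.rank K M ≤ ∑ k ∈ s, Module.rank K (B k) := by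
  classical
  induction s using Finset.induction_on_min generalizing M with
  | empty =>
    have : Subsingleton M := ⟨fun v w => by rw [hsep v (by simp), hsep w (by simp)]⟩
    simp
  | insert a s ha ih =>
    have hrange : LinearMap.range (π a) ≤ B a := by
      rintro _ ⟨w, rfl⟩
      exact hlead w a (s.mem_insert_self a) fun j hj hja => by
        rcases Finset.mem_insert.mp hj with rfl | hj
        · exact absurd hja (lt_irrefl j)
        · exact absurd (ha j hj) hja.not_gt
    have hker : Module.rank K (LinearMap.ker (π a)) ≤ ∑ k ∈ s, Module.rank K (B k) := by
      refine ih (fun k => π k ∘ₗ (LinearMap.ker (π a)).subtype) ?_ ?_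
      · intro w hw
        exact Subtype.ext <| hsep w fun k hk => by
          rcases Finset.mem_insert.mp hk with rfl | hk
          exacts [w.2, hw k hk]
      · intro w k hk hw
        refine hlead w k (Finset.mem_insert_of_mem hk) fun j hj hjk => ?_
        rcases Finset.mem_insert.mp hj with rfl | hj
        exacts [w.2, hw j hj hjk]
    calc Module.rank K M
        = Module.rank K (LinearMap.range (π a)) + Module.rank K (LinearMap.ker (π a)) :=
          (LinearMap.rank_range_add_rank_ker _).symm
      _ ≤ Module.rank K (B a) + ∑ k ∈ s, Module.rank K (B k) :=
          add_le_add (Submodule.rank_mono hrange) hker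
      _ = ∑ k ∈ insert a s, Module.rank K (B k) :=
          (Finset.sum_insert fun has => lt_irrefl a (ha a has)).symm

section Wandering
variable {𝕜 F : Type*} [RCLike 𝕜] [NormedAddCommGroup F] [InnerProductSpace 𝕜 F]

def wanderingSubspace (T : F →L[𝕜] F) (V : Submodule 𝕜 F) : Submodule 𝕜 F :=
  V ⊓ (V.map (T : F →ₗ[𝕜] F))ᗮ

theorem isClosed_map_of_leftInverse {T S : F →L[𝕜] F} (hST : S ∘L T = .id 𝕜 F)
    {V : Submodule 𝕜 F} (hV : IsClosed (V : Set F)) :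
    IsClosed (V.map (T : F →ₗ[𝕜] F) : Set F) := by
  have hST' (x : F) : S (T x) = x := congr($hST x)
  have : (V.map (T : F →ₗ[𝕜] F) : Set F) = {y | T (S y) = y} ∩ S ⁻¹' V := by
    ext y
    constructor
    · rintro ⟨v, hv, rfl⟩
      simp [hST', hv]
    · rintro ⟨hy, hSy⟩
      exact ⟨S y, hSy, hy⟩
  rw [this]
  exact (isClosed_eq (by fun_prop) continuous_id).inter (hV.preimage S.continuous)

theorem rank_le_rank_wanderingSubspace [CompleteSpace F] {T S : F →L[𝕜] F}
    (hST : S ∘L T = .id 𝕜 F) {U V : Submodule 𝕜 F} (hV : IsClosed (V : Set F))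
    (hTV : V.map (T : F →ₗ[𝕜] F) ≤ V) (hTU : U.map (T : F →ₗ[𝕜] F) ≤ V) (hUV : Disjoint U V) :
    Module.rank 𝕜 U ≤ Module.rank 𝕜 (wanderingSubspace T V) := by
  set M := V.map (T : F →ₗ[𝕜] F)
  have : CompleteSpace M := (isClosed_map_of_leftInverse hST hV).completeSpace_coe
  have hTinj : Function.Injective T :=
    Function.LeftInverse.injective (g := S) fun x => congr($hST x)
  let φ : F →L[𝕜] F := T - M.starProjection ∘L T
  have hφ (x : U) : φ x ∈ wanderingSubspace T V :=
    ⟨V.sub_mem (hTU ⟨x, x.2, rfl⟩) (hTV (M.starProjection_apply_mem _)),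
      M.sub_starProjection_mem_orthogonal _⟩
  refine LinearMap.rank_le_of_injective ((φ.toLinearMap ∘ₗ U.subtype).codRestrict _ hφ) ?_
  refine (injective_iff_map_eq_zero _).mpr fun x hx => ?_
  have hTx : T x ∈ M := by
    rw [← M.starProjection_eq_self_iff, eq_comm, ← sub_eq_zero]
    exact congr(Subtype.val $hx)
  obtain ⟨v, hv, hvx⟩ := hTx
  have hxV : (x : F) ∈ V := hTinj hvx ▸ hv
  exact Subtype.ext (hUV.le_bot ⟨x.2, hxV⟩)

end Wandering

section UpperTriangular
variable {R ι : Type*} [Semiring R] [LinearOrder ι] {E : ι → Type*} [∀ i, AddCommMonoid (E i)]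
  [∀ i, Module R (E i)] [∀ i, TopologicalSpace (E i)]

/-- `T` is upper triangular with diagonal `D`, phrased without the entries above the diagonal:
on vectors vanishing above `k`, the `k`-th coordinate of `T x` is `D k (x k)`. -/
def IsUpperTriangular (T : (∀ i, E i) →L[R] ∀ i, E i) (D : ∀ i, E i →L[R] E i) : Prop :=
  ∀ x k, (∀ j, k < j → x j = 0) → T x k = D k (x k)

variable {T : (∀ i, E i) →L[R] ∀ i, E i} {D : ∀ i, E i →L[R] E i}

theorem isUpperTriangular_of_apply_eq [Fintype ι] (A : ∀ i j, i < j → E j →L[R] E i)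
    (hT : ∀ x i, T x i = D i (x i) + ∑ j, if h : i < j then A i j h (x j) else 0) :
    IsUpperTriangular T D := by
  intro x k hx
  rw [hT, Finset.sum_eq_zero, add_zero]
  intro j _
  split_ifs with hkj
  · rw [hx j hkj, map_zero]
  · rfl

namespace IsUpperTriangular

theorem apply_eq_zero_of_le (hT : IsUpperTriangular T D) {i : ι} {x : ∀ i, E i}
    (hx : ∀ j, i < j → x j = 0) (hDx : D i (x i) = 0) {k : ι} (hik : i ≤ k) : T x k = 0 := by
  rcases hik.eq_or_lt with rfl | hik
  · rw [hT x i hx, hDx]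
  · rw [hT x k fun j hkj => hx j (hik.trans hkj), hx k hik, map_zero]

variable [DecidableEq ι]

theorem apply_single_self (hT : IsUpperTriangular T D) (k : ι) (x : E k) :
    T (Pi.single k x) k = D k x := by
  rw [hT _ k fun j hj => Pi.single_eq_of_ne hj.ne' x, Pi.single_eq_same]

theorem apply_single_of_lt (hT : IsUpperTriangular T D) {k m : ι} (hkm : k < m) (x : E k) :
    T (Pi.single k x) m = 0 := by
  rw [hT _ m fun j hj => Pi.single_eq_of_ne (hkm.trans hj).ne' x, Pi.single_eq_of_ne hkm.ne',
    map_zero]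

theorem apply_single_of_isBot (hT : IsUpperTriangular T D) {k : ι} (hk : IsBot k) (x : E k) :
    T (Pi.single k x) = Pi.single k (D k x) := by
  ext m
  rcases (hk m).eq_or_lt with rfl | hkm
  · rw [hT.apply_single_self, Pi.single_eq_same]
  · rw [hT.apply_single_of_lt hkm, Pi.single_eq_of_ne hkm.ne']

theorem exists_leftInverse_of_isBot (hT : IsUpperTriangular T D)
    {S : (∀ i, E i) →L[R] ∀ i, E i} (hST : S ∘L T = .id R _) {k : ι} (hk : IsBot k) :
    ∃ S₀ : E k →L[R] E k, S₀ ∘L D k = .id R (E k) := by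
  refine ⟨ContinuousLinearMap.proj k ∘L S ∘L ContinuousLinearMap.single R E k, ?_⟩
  ext x
  simp [← hT.apply_single_of_isBot hk, ← ContinuousLinearMap.comp_apply S T, hST]

end IsUpperTriangular

end UpperTriangular

section Hilbert
open WithLp
variable {𝕜 : Type*} {ι : Type} [RCLike 𝕜] {H : ι → Type*}
  [∀ i, NormedAddCommGroup (H i)] [∀ i, InnerProductSpace 𝕜 (H i)]

/-- `T` transported to the Hilbert sum `PiLp 2 H`, where inner products live. -/
def piLpConj (T : (∀ i, H i) →L[𝕜] ∀ i, H i) : PiLp 2 H →L[𝕜] PiLp 2 H :=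
  (PiLp.continuousLinearEquiv 2 𝕜 H).symm.toContinuousLinearMap ∘L T ∘L
    (PiLp.continuousLinearEquiv 2 𝕜 H).toContinuousLinearMap

variable [LinearOrder ι]

variable (𝕜 H) in
def vanishingFrom (i : ι) : Submodule 𝕜 (PiLp 2 H) :=
  ⨅ k ≥ i, LinearMap.ker (PiLp.projₗ 2 (𝕜 := 𝕜) H k)

theorem mem_vanishingFrom {i : ι} {w : PiLp 2 H} :
    w ∈ vanishingFrom 𝕜 H i ↔ ∀ k, i ≤ k → w k = 0 := by
  simp [vanishingFrom]

theorem isClosed_vanishingFrom (i : ι) : IsClosed (vanishingFrom 𝕜 H i : Set (PiLp 2 H)) := by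
  simp only [vanishingFrom, Submodule.coe_iInf]
  exact isClosed_iInter fun k => isClosed_iInter fun _ => (PiLp.proj 2 (𝕜 := 𝕜) H k).isClosed_ker

variable [Fintype ι] [DecidableEq ι] {T : (∀ i, H i) →L[𝕜] ∀ i, H i} {D : ∀ i, H i →L[𝕜] H i}

theorem IsUpperTriangular.inner_toLp_apply_single (hT : IsUpperTriangular T D) {k : ι} (x : H k)
    {w : PiLp 2 H} (hw : ∀ j < k, w j = 0) :
    inner 𝕜 (toLp 2 (T (Pi.single k x))) w = inner 𝕜 (D k x) (w k) := by
  rw [PiLp.inner_apply, Finset.sum_eq_single k, PiLp.toLp_apply, hT.apply_single_self]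
  · intro m _ hmk
    rcases hmk.lt_or_gt with hmk | hkm
    · rw [hw m hmk, inner_zero_right]
    · rw [PiLp.toLp_apply, hT.apply_single_of_lt hkm, inner_zero_left]
  · simp

theorem IsUpperTriangular.rank_wanderingSubspace_le (hT : IsUpperTriangular T D) (i : ι) :
    Module.rank 𝕜 (wanderingSubspace (piLpConj T) (vanishingFrom 𝕜 H i)) ≤
      ∑ j ∈ Finset.univ.filter (· < i), Module.rank 𝕜 (LinearMap.range (D j : H j →ₗ[𝕜] H j))ᗮ := by
  set W := wanderingSubspace (piLpConj T) (vanishingFrom 𝕜 H i)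
  refine rank_le_sum_rank_of_leading_mem (fun k => PiLp.projₗ 2 H k ∘ₗ W.subtype) _ _ ?_ ?_
  · intro w hw
    refine Subtype.ext <| PiLp.ext fun k => ?_
    rcases lt_or_ge k i with hki | hik
    · simpa using hw k (by simpa using hki)
    · exact mem_vanishingFrom.mp w.2.1 k hik
  · intro w k hk hw
    have hki : k < i := by simpa using hk
    rw [Submodule.mem_orthogonal]
    rintro _ ⟨x, rfl⟩
    have hxV : toLp 2 (Pi.single k x) ∈ vanishingFrom 𝕜 H i :=
      mem_vanishingFrom.mpr fun m him => Pi.single_eq_of_ne (hki.trans_le him).ne' x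
    have hwk (j) (hjk : j < k) : (w : PiLp 2 H) j = 0 := hw j (by simpa using hjk.trans hki) hjk
    change inner 𝕜 (D k x) ((w : PiLp 2 H) k) = 0
    rw [← hT.inner_toLp_apply_single x hwk]
    exact Submodule.inner_right_of_mem_orthogonal (Submodule.mem_map_of_mem hxV) w.2.2

theorem IsUpperTriangular.rank_ker_le_rank_wanderingSubspace [∀ i, CompleteSpace (H i)]
    (hT : IsUpperTriangular T D) {S : (∀ i, H i) →L[𝕜] ∀ i, H i} (hST : S ∘L T = .id 𝕜 _)
    (i : ι) :
    Module.rank 𝕜 (LinearMap.ker (D i : H i →ₗ[𝕜] H i)) ≤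
      Module.rank 𝕜 (wanderingSubspace (piLpConj T) (vanishingFrom 𝕜 H i)) := by
  let single : H i →ₗ[𝕜] PiLp 2 H :=
    (WithLp.linearEquiv 2 𝕜 (∀ i, H i)).symm.toLinearMap ∘ₗ LinearMap.single 𝕜 H i
  have hsingle : Function.Injective single :=
    (WithLp.linearEquiv 2 𝕜 (∀ i, H i)).symm.injective.comp (Pi.single_injective i)
  rw [(Submodule.equivMapOfInjective single hsingle _).rank_eq]
  refine rank_le_rank_wanderingSubspace (T := piLpConj T) (S := piLpConj S)
    (congrArg piLpConj hST) (isClosed_vanishingFrom i) ?_ ?_ ?_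
  · rintro _ ⟨w, hw, rfl⟩
    have hw := mem_vanishingFrom.mp hw
    exact mem_vanishingFrom.mpr fun k hik => hT.apply_eq_zero_of_le (fun j hij => hw j hij.le)
      (by rw [hw i le_rfl, map_zero]) hik
  · rintro _ ⟨_, ⟨x, hx, rfl⟩, rfl⟩
    exact mem_vanishingFrom.mpr fun k hik => hT.apply_eq_zero_of_le
      (fun j hij => Pi.single_eq_of_ne hij.ne' x) (by rwa [Pi.single_eq_same]) hik
  · rw [Submodule.disjoint_def]
    rintro _ ⟨x, -, rfl⟩ hxV
    have : x = 0 := by simpa [single] using mem_vanishingFrom.mp hxV i le_rfl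
    simp [this]

theorem IsUpperTriangular.rank_ker_le_sum_rank_orthogonal_range [∀ i, CompleteSpace (H i)]
    (hT : IsUpperTriangular T D) {S : (∀ i, H i) →L[𝕜] ∀ i, H i} (hST : S ∘L T = .id 𝕜 _)
    (i : ι) :
    Module.rank 𝕜 (LinearMap.ker (D i : H i →ₗ[𝕜] H i)) ≤
      ∑ j ∈ Finset.univ.filter (· < i), Module.rank 𝕜 (LinearMap.range (D j : H j →ₗ[𝕜] H j))ᗮ :=
  (hT.rank_ker_le_rank_wanderingSubspace hST i).trans (hT.rank_wanderingSubspace_le i)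

end Hilbert

universe u

variable {n : ℕ} {H : Fin n → Type u} [∀ i, NormedAddCommGroup (H i)]
  [∀ i, InnerProductSpace ℂ (H i)] [∀ i, CompleteSpace (H i)]

/-- If some upper triangular completion with diagonal `D₁, …, D_n` is left invertible,
then `D₁` is left invertible and `α(D_i) ≤ β(D₁) + ⋯ + β(D_{i-1})` for `2 ≤ i ≤ n`. -/
theorem stmt14 (hn : 2 ≤ n) (D : ∀ i, H i →L[ℂ] H i)
    (h : ∃ A : ∀ i j : Fin n, i < j → (H j →L[ℂ] H i),
      ∃ T : (∀ i, H i) →L[ℂ] (∀ i, H i),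
        (∀ x : ∀ i, H i, ∀ i : Fin n,
          T x i = D i (x i) + ∑ j : Fin n, if h : i < j then A i j h (x j) else 0) ∧
        ∃ S : (∀ i, H i) →L[ℂ] (∀ i, H i),
          S.comp T = ContinuousLinearMap.id ℂ (∀ i, H i)) :
    (∃ S : H ⟨0, by omega⟩ →L[ℂ] H ⟨0, by omega⟩,
      S.comp (D ⟨0, by omega⟩) = ContinuousLinearMap.id ℂ (H ⟨0, by omega⟩)) ∧
    ∀ i : Fin n, (i : ℕ) ≠ 0 →
      Module.rank ℂ (LinearMap.ker (D i : H i →ₗ[ℂ] H i)) ≤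
        ∑ j ∈ Finset.univ.filter (fun j : Fin n => j < i),
          Module.rank ℂ ((LinearMap.range (D j : H j →ₗ[ℂ] H j))ᗮ) := by
  obtain ⟨A, T, hTA, S, hST⟩ := h
  have hT : IsUpperTriangular T D := isUpperTriangular_of_apply_eq A hTA
  exact ⟨hT.exists_leftInverse_of_isBot hST fun j => Nat.zero_le j,
    fun i _ => hT.rank_ker_le_sum_rank_orthogonal_range hST i⟩
end

section
/- Let D₁ ∈ B(H₁), D₂ ∈ B(H₂) on Hilbert spaces with D₁ left-Fredholm (α(D₁) < ∞ and R(D₁) closed) and D₂ left-Fredholm, and suppose α(D₁) + α(D₂) ≤ β(D₁) + β(D₂) (as extended naturals). Then there exists A ∈ B(H₂, H₁) such that the operator matrix [[D₁, A],[0, D₂]] is left Weyl on H₁ ⊕ H₂, i.e. left-Fredholm with index ≤ 0. -/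
universe u v

namespace Submodule

variable {R : Type*} {M : Type u} {N : Type v}

def prodEquiv [Semiring R] [AddCommMonoid M] [AddCommMonoid N] [Module R M] [Module R N]
    (p : Submodule R M) (q : Submodule R N) : p.prod q ≃ₗ[R] p × q where
  toFun x := (⟨x.1.1, x.2.1⟩, ⟨x.1.2, x.2.2⟩)
  invFun y := ⟨(y.1.1, y.2.1), ⟨y.1.2, y.2.2⟩⟩
  map_add' _ _ := rfl
  map_smul' _ _ := rfl
  left_inv _ := rfl
  right_inv _ := rfl

noncomputable def quotientProdEquiv [Ring R] [AddCommGroup M] [AddCommGroup N]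
    [Module R M] [Module R N] (p : Submodule R M) (q : Submodule R N) :
    ((M × N) ⧸ p.prod q) ≃ₗ[R] (M ⧸ p) × (N ⧸ q) :=
  have hker : LinearMap.ker (p.mkQ.prodMap q.mkQ) = p.prod q := by
    rw [LinearMap.ker_prodMap, ker_mkQ, ker_mkQ]
  (quotEquivOfEq _ _ hker.symm).trans <|
    LinearMap.quotKerEquivOfSurjective _ (p.mkQ_surjective.prodMap q.mkQ_surjective)

theorem rank_prod_eq [DivisionRing R] [AddCommGroup M] [AddCommGroup N] [Module R M]
    [Module R N] (p : Submodule R M) (q : Submodule R N) :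
    Module.rank R (p.prod q) =
      Cardinal.lift.{v} (Module.rank R p) + Cardinal.lift.{u} (Module.rank R q) := by
  rw [(prodEquiv p q).rank_eq, rank_prod]

theorem rank_quotient_prod_eq [DivisionRing R] [AddCommGroup M] [AddCommGroup N]
    [Module R M] [Module R N] (p : Submodule R M) (q : Submodule R N) :
    Module.rank R ((M × N) ⧸ p.prod q) =
      Cardinal.lift.{v} (Module.rank R (M ⧸ p)) + Cardinal.lift.{u} (Module.rank R (N ⧸ q)) := by
  rw [(quotientProdEquiv p q).rank_eq, rank_prod]

theorem rank_quotient_eq_rank_orthogonal {𝕜 E : Type*} [RCLike 𝕜] [NormedAddCommGroup E]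
    [InnerProductSpace 𝕜 E] (K : Submodule 𝕜 E) [K.HasOrthogonalProjection] :
    Module.rank 𝕜 (E ⧸ K) = Module.rank 𝕜 Kᗮ :=
  (quotientEquivOfIsCompl K Kᗮ K.isCompl_orthogonal).rank_eq

end Submodule

theorem upperTriangular_zero {H₁ H₂ : Type*} [NormedAddCommGroup H₁] [NormedAddCommGroup H₂]
    [NormedSpace ℂ H₁] [NormedSpace ℂ H₂] (D₁ : H₁ →L[ℂ] H₁) (D₂ : H₂ →L[ℂ] H₂) :
    upperTriangular D₁ D₂ 0 = D₁.prodMap D₂ := by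
  simp [upperTriangular, ContinuousLinearMap.prodMap]

variable {H₁ : Type u} {H₂ : Type v} [NormedAddCommGroup H₁] [InnerProductSpace ℂ H₁]
  [CompleteSpace H₁] [NormedAddCommGroup H₂] [InnerProductSpace ℂ H₂] [CompleteSpace H₂]

/-- If `D₁` and `D₂` are left-Fredholm and `α(D₁) + α(D₂) ≤ β(D₁) + β(D₂)`, then some
completion `[[D₁, A],[0, D₂]]` is left Weyl (left-Fredholm with index `≤ 0`). -/
theorem stmt19 (D₁ : H₁ →L[ℂ] H₁) (D₂ : H₂ →L[ℂ] H₂)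
    (hf1 : Module.rank ℂ (LinearMap.ker (D₁ : H₁ →ₗ[ℂ] H₁)) < Cardinal.aleph0 ∧
      IsClosed (LinearMap.range (D₁ : H₁ →ₗ[ℂ] H₁) : Set H₁))
    (hf2 : Module.rank ℂ (LinearMap.ker (D₂ : H₂ →ₗ[ℂ] H₂)) < Cardinal.aleph0 ∧
      IsClosed (LinearMap.range (D₂ : H₂ →ₗ[ℂ] H₂) : Set H₂))
    (hind : Cardinal.lift.{v} (Module.rank ℂ (LinearMap.ker (D₁ : H₁ →ₗ[ℂ] H₁))) +
        Cardinal.lift.{u} (Module.rank ℂ (LinearMap.ker (D₂ : H₂ →ₗ[ℂ] H₂))) ≤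
      Cardinal.lift.{v} (Module.rank ℂ ((LinearMap.range (D₁ : H₁ →ₗ[ℂ] H₁))ᗮ)) +
        Cardinal.lift.{u} (Module.rank ℂ ((LinearMap.range (D₂ : H₂ →ₗ[ℂ] H₂))ᗮ))) :
    ∃ A : H₂ →L[ℂ] H₁,
      Module.rank ℂ (LinearMap.ker
          (upperTriangular D₁ D₂ A : (H₁ × H₂) →ₗ[ℂ] (H₁ × H₂))) < Cardinal.aleph0 ∧
      IsClosed (LinearMap.range
          (upperTriangular D₁ D₂ A : (H₁ × H₂) →ₗ[ℂ] (H₁ × H₂)) : Set (H₁ × H₂)) ∧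
      Module.rank ℂ (LinearMap.ker
          (upperTriangular D₁ D₂ A : (H₁ × H₂) →ₗ[ℂ] (H₁ × H₂))) ≤
        Module.rank ℂ ((H₁ × H₂) ⧸ LinearMap.range
          (upperTriangular D₁ D₂ A : (H₁ × H₂) →ₗ[ℂ] (H₁ × H₂))) := by
  have := hf1.2.completeSpace_coe
  have := hf2.2.completeSpace_coe
  refine ⟨0, ?_⟩
  rw [upperTriangular_zero, ContinuousLinearMap.coe_prodMap, LinearMap.ker_prodMap,
    LinearMap.range_prodMap, Submodule.rank_prod_eq, Submodule.prod_coe,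
    Submodule.rank_quotient_prod_eq, Submodule.rank_quotient_eq_rank_orthogonal,
    Submodule.rank_quotient_eq_rank_orthogonal]
  exact ⟨Cardinal.add_lt_aleph0 (Cardinal.lift_lt_aleph0.2 hf1.1)
    (Cardinal.lift_lt_aleph0.2 hf2.1), hf1.2.prod hf2.2, hind⟩
end
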